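/- arXiv:2205.10875 — 2 statements merged into one kernel-verified Lean document; each statement's English description precedes it below -/
import Mathlib

section
/- For every (m,n) ∈ ℝ³ × ℝ³, the strains (u,v) = F(m,n) satisfy Q(u,v) = (γ^p + Q*(m,n)^{p/2})^{−2/p} · Q*(m,n); consequently Q(F(m,n)) < 1 (the model is strain-limiting). -/
/-- The quadratic form
`Q(u,v) = α²(u₁² + u₂²) + β²u₃² + ζ²(v₁² + v₂²) + η²(v₃ − 1)² + 2ι u₃(v₃ − 1)`. -/
def Q (α β ζ η ι : ℝ) (u v : Fin 3 → ℝ) : ℝ :=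
  α ^ 2 * (u 0 ^ 2 + u 1 ^ 2) + β ^ 2 * u 2 ^ 2 + ζ ^ 2 * (v 0 ^ 2 + v 1 ^ 2)
    + η ^ 2 * (v 2 - 1) ^ 2 + 2 * ι * u 2 * (v 2 - 1)

/-- The complementary quadratic form `Q*(m,n)`. -/
noncomputable def Qstar (α β ζ η ι : ℝ) (m n : Fin 3 → ℝ) : ℝ :=
  (m 0 ^ 2 + m 1 ^ 2) / α ^ 2 + (n 0 ^ 2 + n 1 ^ 2) / ζ ^ 2
    + (η ^ 2 * m 2 ^ 2 + β ^ 2 * n 2 ^ 2 - 2 * ι * m 2 * n 2) / (β ^ 2 * η ^ 2 - ι ^ 2)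

/-- The forward constitutive map `F : (m,n) ↦ (u,v)`, with
`λ = (γ^p + Q*(m,n)^{p/2})^{−1/p}`. -/
noncomputable def Fmap (p α β γ ζ η ι : ℝ) (m n : Fin 3 → ℝ) :
    (Fin 3 → ℝ) × (Fin 3 → ℝ) :=
  let lam : ℝ := (γ ^ p + (Qstar α β ζ η ι m n) ^ (p / 2)) ^ (-(1 / p))
  (![lam * m 0 / α ^ 2, lam * m 1 / α ^ 2,
      lam * (η ^ 2 * m 2 - ι * n 2) / (β ^ 2 * η ^ 2 - ι ^ 2)],
   ![lam * n 0 / ζ ^ 2, lam * n 1 / ζ ^ 2,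
      1 + lam * (β ^ 2 * n 2 - ι * m 2) / (β ^ 2 * η ^ 2 - ι ^ 2)])


lemma Q_aux (α β ζ η ι lam : ℝ) (hα2 : α ^ 2 ≠ 0) (hζ2 : ζ ^ 2 ≠ 0)
    (hD : β ^ 2 * η ^ 2 - ι ^ 2 ≠ 0) (m n : Fin 3 → ℝ) :
    Q α β ζ η ι
      ![lam * m 0 / α ^ 2, lam * m 1 / α ^ 2,
        lam * (η ^ 2 * m 2 - ι * n 2) / (β ^ 2 * η ^ 2 - ι ^ 2)]
      ![lam * n 0 / ζ ^ 2, lam * n 1 / ζ ^ 2,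
        1 + lam * (β ^ 2 * n 2 - ι * m 2) / (β ^ 2 * η ^ 2 - ι ^ 2)]
      = lam ^ 2 * Qstar α β ζ η ι m n := by
  unfold Q Qstar
  simp only [Matrix.cons_val_zero, Matrix.cons_val_one, Matrix.head_cons,
    Matrix.cons_val_two, Matrix.tail_cons]
  field_simp
  ring

/-- the strains `(u,v) = F(m,n)` satisfy
`Q(u,v) = (γ^p + Q*(m,n)^{p/2})^{−2/p} · Q*(m,n)`; consequently `Q(F(m,n)) < 1`. -/
theorem Q_of_Fmap (p α β γ ζ η ι : ℝ) (hp : 0 < p) (hα : 0 < α) (hβ : 0 < β)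
    (hγ : 0 < γ) (hζ : 0 < ζ) (hη : 0 < η) (hβηι : 0 < β ^ 2 * η ^ 2 - ι ^ 2) :
    ∀ m n : Fin 3 → ℝ,
      Q α β ζ η ι (Fmap p α β γ ζ η ι m n).1 (Fmap p α β γ ζ η ι m n).2
        = (γ ^ p + (Qstar α β ζ η ι m n) ^ (p / 2)) ^ (-(2 / p)) * Qstar α β ζ η ι m n ∧
      Q α β ζ η ι (Fmap p α β γ ζ η ι m n).1 (Fmap p α β γ ζ η ι m n).2 < 1 := by
  intro m n
  have hpne : p ≠ 0 := hp.ne'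
  have hα2 : (α:ℝ) ^ 2 ≠ 0 := by positivity
  have hζ2 : (ζ:ℝ) ^ 2 ≠ 0 := by positivity
  have hD : β ^ 2 * η ^ 2 - ι ^ 2 ≠ 0 := ne_of_gt hβηι
  set q := Qstar α β ζ η ι m n with hqdef
  have hq0 : 0 ≤ q := by
    have h1 : 0 ≤ η ^ 2 * m 2 ^ 2 + β ^ 2 * n 2 ^ 2 - 2 * ι * m 2 * n 2 := by
      nlinarith [sq_nonneg (η ^ 2 * m 2 - ι * n 2), mul_nonneg hβηι.le (sq_nonneg (n 2)),
        pow_pos hη 2]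
    have h2 : 0 ≤ (m 0 ^ 2 + m 1 ^ 2) / α ^ 2 := by positivity
    have h3 : 0 ≤ (n 0 ^ 2 + n 1 ^ 2) / ζ ^ 2 := by positivity
    have h4 : 0 ≤ (η ^ 2 * m 2 ^ 2 + β ^ 2 * n 2 ^ 2 - 2 * ι * m 2 * n 2)
        / (β ^ 2 * η ^ 2 - ι ^ 2) := div_nonneg h1 hβηι.le
    rw [hqdef]; unfold Qstar; linarith
  have hS : 0 < γ ^ p + q ^ (p / 2) := by
    have := Real.rpow_pos_of_pos hγ p
    have := Real.rpow_nonneg hq0 (p / 2)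
    linarith
  set S : ℝ := γ ^ p + q ^ (p / 2) with hSdef
  set L : ℝ := S ^ (-(1 / p)) with hLdef
  have hmain : Q α β ζ η ι (Fmap p α β γ ζ η ι m n).1 (Fmap p α β γ ζ η ι m n).2
      = L ^ 2 * q := by
    have hF : Fmap p α β γ ζ η ι m n =
        (![L * m 0 / α ^ 2, L * m 1 / α ^ 2,
            L * (η ^ 2 * m 2 - ι * n 2) / (β ^ 2 * η ^ 2 - ι ^ 2)],
         ![L * n 0 / ζ ^ 2, L * n 1 / ζ ^ 2,
            1 + L * (β ^ 2 * n 2 - ι * m 2) / (β ^ 2 * η ^ 2 - ι ^ 2)]) := rfl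
    rw [hF]
    exact Q_aux α β ζ η ι L hα2 hζ2 hD m n
  have hL2 : L ^ 2 = S ^ (-(2 / p)) := by
    rw [hLdef, sq, ← Real.rpow_add hS]
    congr 1
    ring
  have hSp : 0 < S ^ (2 / p) := Real.rpow_pos_of_pos hS _
  have hlt : q < S ^ (2 / p) := by
    have hq2 : q ^ (p / 2) < S := by
      have := Real.rpow_pos_of_pos hγ p
      rw [hSdef]
      linarith
    calc q = (q ^ (p / 2)) ^ (2 / p) := by
            rw [← Real.rpow_mul hq0, show p / 2 * (2 / p) = 1 by field_simp,
              Real.rpow_one]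
      _ < S ^ (2 / p) :=
            Real.rpow_lt_rpow (Real.rpow_nonneg hq0 _) hq2 (by positivity)
  constructor
  · rw [hmain, hL2]
  · rw [hmain, hL2]
    calc S ^ (-(2 / p)) * q = q / S ^ (2 / p) := by
          rw [Real.rpow_neg hS.le]; ring
      _ < 1 := (div_lt_one hSp).mpr hlt
end

section
/- For every (m,n) ∈ ℝ³ × ℝ³, the strains (u,v) = F(m,n) satisfy Q(u,v) < 1 and G(u,v) = (m,n); that is, the backward constitutive map G inverts the forward constitutive map F. -/
/-- The backward constitutive map `G : (u,v) ↦ (m,n)`, with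
`μ = γ(1 − Q(u,v)^{p/2})^{−1/p}`. -/
noncomputable def Gmap (p α β γ ζ η ι : ℝ) (u v : Fin 3 → ℝ) :
    (Fin 3 → ℝ) × (Fin 3 → ℝ) :=
  let mu : ℝ := γ * (1 - (Q α β ζ η ι u v) ^ (p / 2)) ^ (-(1 / p))
  (![mu * α ^ 2 * u 0, mu * α ^ 2 * u 1, mu * (β ^ 2 * u 2 + ι * (v 2 - 1))],
   ![mu * ζ ^ 2 * v 0, mu * ζ ^ 2 * v 1, mu * (ι * u 2 + η ^ 2 * (v 2 - 1))])

/-!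
Let `A` be the matrix of `Q` in the variables `(u, v - e₃)`; then `Q*` is the form of `A⁻¹` and
`F(m,n) = λ A⁻¹ (m,n) + (0, e₃)`, so `Q(F(m,n)) = λ² Q*(m,n)` and `G(F(m,n)) = μ λ (m,n)`.
For `S = Q*(m,n) ≥ 0` and `L = γ^p + S^{p/2}` we have `λ^p = L⁻¹`, hence
`1 - (λ² S)^{p/2} = λ^p (L - S^{p/2}) = (γλ)^p`, a number in `(0,1)`. This gives both
`Q(F(m,n)) < 1` and `μ = γ ((γλ)^p)^{-1/p} = λ⁻¹`.
-/

noncomputable def strain (α β ζ η ι c : ℝ) (m n : Fin 3 → ℝ) : (Fin 3 → ℝ) × (Fin 3 → ℝ) :=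
  (![c * m 0 / α ^ 2, c * m 1 / α ^ 2, c * (η ^ 2 * m 2 - ι * n 2) / (β ^ 2 * η ^ 2 - ι ^ 2)],
   ![c * n 0 / ζ ^ 2, c * n 1 / ζ ^ 2, 1 + c * (β ^ 2 * n 2 - ι * m 2) / (β ^ 2 * η ^ 2 - ι ^ 2)])

noncomputable def scaleFactor (p γ S : ℝ) : ℝ := (γ ^ p + S ^ (p / 2)) ^ (-(1 / p))

theorem Fmap_eq_strain (p α β γ ζ η ι : ℝ) (m n : Fin 3 → ℝ) :
    Fmap p α β γ ζ η ι m n = strain α β ζ η ι (scaleFactor p γ (Qstar α β ζ η ι m n)) m n :=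
  rfl

section Algebra

variable {α β ζ η ι : ℝ}

theorem Qstar_nonneg (hD : 0 < β ^ 2 * η ^ 2 - ι ^ 2) (m n : Fin 3 → ℝ) :
    0 ≤ Qstar α β ζ η ι m n := by
  have hη : 0 < η ^ 2 := by
    by_contra h
    nlinarith [sq_nonneg ι, sq_nonneg β, sq_nonneg η]
  -- `η² (η² m² + β² n² − 2ι m n) = (η² m − ι n)² + (β²η² − ι²) n²`
  have hnum : 0 ≤ η ^ 2 * m 2 ^ 2 + β ^ 2 * n 2 ^ 2 - 2 * ι * m 2 * n 2 := by
    refine nonneg_of_mul_nonneg_right ?_ hη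
    nlinarith [sq_nonneg (η ^ 2 * m 2 - ι * n 2), mul_nonneg hD.le (sq_nonneg (n 2))]
  unfold Qstar
  have := div_nonneg hnum hD.le
  positivity

variable (hα : α ≠ 0) (hζ : ζ ≠ 0) (hD : β ^ 2 * η ^ 2 - ι ^ 2 ≠ 0)
include hα hζ hD

theorem Q_strain (c : ℝ) (m n : Fin 3 → ℝ) :
    Q α β ζ η ι (strain α β ζ η ι c m n).1 (strain α β ζ η ι c m n).2
      = c ^ 2 * Qstar α β ζ η ι m n := by
  simp only [Q, Qstar, strain, Matrix.cons_val_zero, Matrix.cons_val_one, Matrix.cons_val_two,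
    Matrix.head_cons, Matrix.tail_cons]
  field_simp
  ring

theorem Gmap_strain (p γ c : ℝ) (m n : Fin 3 → ℝ) :
    Gmap p α β γ ζ η ι (strain α β ζ η ι c m n).1 (strain α β ζ η ι c m n).2
      = (γ * (1 - (c ^ 2 * Qstar α β ζ η ι m n) ^ (p / 2)) ^ (-(1 / p)) * c) • (m, n) := by
  simp only [Gmap, Q_strain hα hζ hD]
  generalize γ * (1 - (c ^ 2 * Qstar α β ζ η ι m n) ^ (p / 2)) ^ (-(1 / p)) = μ
  refine Prod.ext ?_ ?_ <;> funext i <;> fin_cases i <;>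
    simp only [strain, Matrix.cons_val_zero, Matrix.cons_val_one, Matrix.cons_val_two,
      Matrix.head_cons, Matrix.tail_cons, Fin.reduceFinMk,
      Prod.smul_fst, Prod.smul_snd, Pi.smul_apply, smul_eq_mul, add_sub_cancel_left] <;>
    first
    | field_simp; done
    | rw [mul_div_assoc', mul_div_assoc', ← add_div, mul_div_assoc', div_eq_iff hD]; ring

end Algebra

section Scalar

variable {p γ S : ℝ} (hγ : 0 < γ) (hS : 0 ≤ S)
include hγ hS

theorem rpow_add_rpow_pos : 0 < γ ^ p + S ^ (p / 2) :=
  add_pos_of_pos_of_nonneg (Real.rpow_pos_of_pos hγ p) (Real.rpow_nonneg hS _)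

theorem scaleFactor_pos : 0 < scaleFactor p γ S :=
  Real.rpow_pos_of_pos (rpow_add_rpow_pos hγ hS) _

variable (hp : 0 < p)
include hp

theorem scaleFactor_rpow : scaleFactor p γ S ^ p = (γ ^ p + S ^ (p / 2))⁻¹ := by
  rw [scaleFactor, ← Real.rpow_mul (rpow_add_rpow_pos hγ hS).le,
    show -(1 / p) * p = -1 by field_simp, Real.rpow_neg_one]

theorem one_sub_rpow_sq_scaleFactor_mul :
    1 - (scaleFactor p γ S ^ 2 * S) ^ (p / 2) = (γ * scaleFactor p γ S) ^ p := by
  have hc := (scaleFactor_pos (p := p) hγ hS).le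
  have hcp : (scaleFactor p γ S ^ 2) ^ (p / 2) = scaleFactor p γ S ^ p := by
    rw [← Real.rpow_natCast, ← Real.rpow_mul hc]
    congr 1
    push_cast
    ring
  have hL := (rpow_add_rpow_pos hγ hS (p := p)).ne'
  rw [Real.mul_rpow (by positivity) hS, Real.mul_rpow hγ.le hc, hcp,
    scaleFactor_rpow hγ hS hp]
  field_simp
  ring

theorem sq_scaleFactor_mul_lt_one : scaleFactor p γ S ^ 2 * S < 1 := by
  have hc := scaleFactor_pos (p := p) hγ hS
  rw [← Real.rpow_lt_one_iff' (by positivity) (half_pos hp)]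
  have := Real.rpow_pos_of_pos (mul_pos hγ hc) p
  linarith [one_sub_rpow_sq_scaleFactor_mul hγ hS hp]

theorem mul_scaleFactor_eq_one :
    γ * (1 - (scaleFactor p γ S ^ 2 * S) ^ (p / 2)) ^ (-(1 / p)) * scaleFactor p γ S = 1 := by
  have hc := scaleFactor_pos (p := p) hγ hS
  rw [one_sub_rpow_sq_scaleFactor_mul hγ hS hp, ← Real.rpow_mul (by positivity),
    show p * -(1 / p) = -1 by field_simp, Real.rpow_neg_one]
  field_simp

end Scalar

theorem Gmap_comp_Fmap_general (p α β γ ζ η ι : ℝ) (hp : 0 < p) (hα : 0 < α)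
    (hγ : 0 < γ) (hζ : 0 < ζ) (hβηι : 0 < β ^ 2 * η ^ 2 - ι ^ 2) :
    ∀ m n : Fin 3 → ℝ,
      Q α β ζ η ι (Fmap p α β γ ζ η ι m n).1 (Fmap p α β γ ζ η ι m n).2 < 1 ∧
      Gmap p α β γ ζ η ι (Fmap p α β γ ζ η ι m n).1 (Fmap p α β γ ζ η ι m n).2
        = (m, n) := by
  intro m n
  have hS := Qstar_nonneg (α := α) (ζ := ζ) hβηι m n
  rw [Fmap_eq_strain, Q_strain hα.ne' hζ.ne' hβηι.ne', Gmap_strain hα.ne' hζ.ne' hβηι.ne',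
    mul_scaleFactor_eq_one hγ hS hp, one_smul]
  exact ⟨sq_scaleFactor_mul_lt_one hγ hS hp, rfl⟩

/-- for every `(m,n)`, the strains `(u,v) = F(m,n)` satisfy `Q(u,v) < 1`
and `G(u,v) = (m,n)`: `G` inverts `F`. -/
theorem Gmap_comp_Fmap (p α β γ ζ η ι : ℝ) (hp : 0 < p) (hα : 0 < α) (hβ : 0 < β)
    (hγ : 0 < γ) (hζ : 0 < ζ) (hη : 0 < η) (hβηι : 0 < β ^ 2 * η ^ 2 - ι ^ 2) :
    ∀ m n : Fin 3 → ℝ,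
      Q α β ζ η ι (Fmap p α β γ ζ η ι m n).1 (Fmap p α β γ ζ η ι m n).2 < 1 ∧
      Gmap p α β γ ζ η ι (Fmap p α β γ ζ η ι m n).1 (Fmap p α β γ ζ η ι m n).2
        = (m, n) :=
  Gmap_comp_Fmap_general p α β γ ζ η ι hp hα hγ hζ hβηι
end
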